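/- arXiv:2501.13018 — 2 statements merged into one kernel-verified Lean document; each statement's English description precedes it below -/
import Mathlib

section
/- In a finite directed acyclic graph, define recursively for each node $i$: if $i$ is a leaf (no children) then $v_i = 1$; otherwise $v_i = \sum_{j \in \mathrm{children}(i)} v_j / |\mathrm{parents}(j)|$. Then the sum of $v_i$ over all root nodes (nodes with no parents) equals the total number of leaves in the DAG. -/
/-!
Summing the recursion over all internal nodes and exchanging the order of summation, each
non-root `j` is counted once from each of its `|parents(j)|` parents with weight
`v j / |parents(j)|`. Hence the total of `v` over the internal nodes equals its total over the
non-roots, and removing this common part from `∑ i, v i` leaves `∑ roots v = ∑ leaves v = #leaves`.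
-/

open Finset

section EffectiveLeaves

variable {V : Type*} [Fintype V] (E : V → V → Prop) [DecidableRel E]

theorem sum_sum_children_div_card_parents (v : V → ℝ) :
    ∑ i, ∑ j ∈ univ.filter (E i), v j / #(univ.filter (E · j))
      = ∑ j ∈ univ.filter (fun j => ∃ k, E k j), v j := by
  refine (sum_sum_bipartiteAbove_eq_sum_sum_bipartiteBelow E (fun _ j => _)).trans ?_
  rw [sum_filter]
  refine sum_congr rfl fun j _ => ?_
  rw [bipartiteBelow, sum_const, nsmul_eq_mul]
  split_ifs with hj
  · obtain ⟨k, hk⟩ := hj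
    have hpos : (0 : ℝ) < #(univ.filter (E · j)) :=
      mod_cast card_pos.mpr ⟨k, mem_filter.mpr ⟨mem_univ k, hk⟩⟩
    field_simp
  · rw [filter_false_of_mem fun k _ => not_exists.mp hj k, card_empty, Nat.cast_zero, zero_mul]

theorem sum_roots_eq_sum_leaves (v : V → ℝ)
    (hrec : ∀ i, (∃ j, E i j) →
      v i = ∑ j ∈ univ.filter (E i), v j / #(univ.filter (E · j))) :
    ∑ i ∈ univ.filter (fun i => ∀ k, ¬ E k i), v i
      = ∑ i ∈ univ.filter (fun i => ∀ j, ¬ E i j), v i := by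
  have hinternal : ∑ i ∈ univ.filter (fun i => ∃ j, E i j), v i
      = ∑ j ∈ univ.filter (fun j => ∃ k, E k j), v j := by
    rw [← sum_sum_children_div_card_parents E v, sum_filter]
    refine sum_congr rfl fun i _ => ?_
    split_ifs with hi
    · exact hrec i hi
    · rw [filter_false_of_mem fun j _ => not_exists.mp hi j, sum_empty]
  have hroots := sum_filter_not_add_sum_filter univ (fun i => ∃ k, E k i) v
  have hleaves := sum_filter_not_add_sum_filter univ (fun i => ∃ j, E i j) v
  simp only [not_exists] at hroots hleaves
  linarith

end EffectiveLeaves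

theorem dagger_effective_leaves_general
    {V : Type*} [Fintype V]
    (E : V → V → Prop) [DecidableRel E]
    (v : V → ℝ)
    (hleaf : ∀ i, (∀ j, ¬ E i j) → v i = 1)
    (hrec : ∀ i, (∃ j, E i j) →
      v i = ∑ j ∈ univ.filter (fun j => E i j),
        v j / (univ.filter (fun k => E k j)).card) :
    ∑ i ∈ univ.filter (fun i => ∀ k, ¬ E k i), v i
      = (univ.filter (fun i => ∀ j, ¬ E i j)).card := by
  rw [sum_roots_eq_sum_leaves E v hrec, card_eq_sum_ones, Nat.cast_sum, Nat.cast_one]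
  exact sum_congr rfl fun i hi => hleaf i (mem_filter.mp hi).2

/-- In a finite DAG, if `v` satisfies the DAGGER recursion for the effective
number of leaves (`v i = 1` at leaves, `v i = ∑_{j ∈ children(i)} v j / |parents(j)|`
otherwise), then the sum of `v` over the roots equals the number of leaves. -/
theorem dagger_effective_leaves
    {V : Type*} [Fintype V] [DecidableEq V]
    (E : V → V → Prop) [DecidableRel E]
    (hacyc : ∀ i, ¬ Relation.TransGen E i i)
    (v : V → ℝ)
    (hleaf : ∀ i, (∀ j, ¬ E i j) → v i = 1)
    (hrec : ∀ i, (∃ j, E i j) →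
      v i = ∑ j ∈ univ.filter (fun j => E i j),
        v j / (univ.filter (fun k => E k j)).card) :
    ∑ i ∈ univ.filter (fun i => ∀ k, ¬ E k i), v i
      = (univ.filter (fun i => ∀ j, ¬ E i j)).card :=
  dagger_effective_leaves_general E v hleaf hrec
end

section
/- In a finite directed acyclic graph, define for each node $i$: if $i$ is a leaf then $m_i = 1$; otherwise $m_i = 1 + \sum_{j \in \mathrm{children}(i)} m_j / |\mathrm{parents}(j)|$. Then the sum of $m_i$ over all root nodes equals the total number of nodes in the DAG. -/
/-!
Unfolding the recursion at every node gives `∑ i, m i = |V| + ∑ i ∑_{j child of i} m j / indeg j`.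
Exchanging the order of summation, each non-root `j` is counted once from each of its
`indeg j` parents, so the double sum is the sum of `m` over the non-roots. Subtracting it
leaves `|V|` as the sum of `m` over the roots.
-/

open Finset

theorem sum_natCast_mul_div_self_eq_sum_filter_ne_zero {ι : Type*} (s : Finset ι) (n : ι → ℕ)
    (x : ι → ℝ) : ∑ j ∈ s, (n j : ℝ) * (x j / n j) = ∑ j ∈ s with n j ≠ 0, x j := by
  rw [sum_filter]
  refine sum_congr rfl fun j _ => ?_
  split_ifs with h
  · exact mul_div_cancel₀ _ (Nat.cast_ne_zero.mpr h)
  · simp [not_not.mp h]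

section Digraph

variable {V : Type*} [Fintype V] (E : V → V → Prop) [DecidableRel E]

theorem sum_sum_children_eq_sum_card_parents_mul (g : V → ℝ) :
    ∑ i, ∑ j ∈ univ.filter (fun j => E i j), g j
      = ∑ j, ((univ.filter (fun k => E k j)).card : ℝ) * g j := by
  simp only [sum_filter]
  rw [sum_comm]
  simp only [← sum_filter, sum_const, nsmul_eq_mul]

theorem card_parents_eq_zero_iff (j : V) :
    (univ.filter (fun k => E k j)).card = 0 ↔ ∀ k, ¬ E k j := by
  simp [filter_eq_empty_iff]

end Digraph

theorem dagger_effective_nodes_general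
    {V : Type*} [Fintype V]
    (E : V → V → Prop) [DecidableRel E]
    (m : V → ℝ)
    (hleaf : ∀ i, (∀ j, ¬ E i j) → m i = 1)
    (hrec : ∀ i, (∃ j, E i j) →
      m i = 1 + ∑ j ∈ univ.filter (fun j => E i j),
        m j / (univ.filter (fun k => E k j)).card) :
    ∑ i ∈ univ.filter (fun i => ∀ k, ¬ E k i), m i
      = Fintype.card V := by
  set indeg : V → ℕ := fun j => (univ.filter (fun k => E k j)).card
  have hm : ∀ i, m i = 1 + ∑ j ∈ univ.filter (fun j => E i j), m j / indeg j := by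
    intro i
    by_cases h : ∃ j, E i j
    · exact hrec i h
    · have hi : ∀ j, ¬ E i j := not_exists.mp h
      simp [hleaf i hi, hi]
  have hroots : univ.filter (fun i => ∀ k, ¬ E k i) = univ.filter (fun i => indeg i = 0) :=
    filter_congr fun i _ => (card_parents_eq_zero_iff E i).symm
  have htotal : ∑ i, m i = Fintype.card V + ∑ j with indeg j ≠ 0, m j := by
    calc ∑ i, m i = ∑ i, (1 + ∑ j ∈ univ.filter (fun j => E i j), m j / indeg j) :=
          sum_congr rfl fun i _ => hm i
      _ = Fintype.card V + ∑ j, (indeg j : ℝ) * (m j / indeg j) := by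
          rw [sum_add_distrib, sum_sum_children_eq_sum_card_parents_mul, sum_const, card_univ,
            nsmul_one]
      _ = Fintype.card V + ∑ j with indeg j ≠ 0, m j := by
          rw [sum_natCast_mul_div_self_eq_sum_filter_ne_zero]
  rw [hroots]
  linarith [sum_filter_add_sum_filter_not univ (fun j => indeg j = 0) m]

/-- In a finite DAG, if `m` satisfies the DAGGER recursion for the effective
number of nodes (`m i = 1` at leaves, `m i = 1 + ∑_{j ∈ children(i)} m j / |parents(j)|`
otherwise), then the sum of `m` over the roots equals the total number of nodes. -/
theorem dagger_effective_nodes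
    {V : Type*} [Fintype V] [DecidableEq V]
    (E : V → V → Prop) [DecidableRel E]
    (hacyc : ∀ i, ¬ Relation.TransGen E i i)
    (m : V → ℝ)
    (hleaf : ∀ i, (∀ j, ¬ E i j) → m i = 1)
    (hrec : ∀ i, (∃ j, E i j) →
      m i = 1 + ∑ j ∈ univ.filter (fun j => E i j),
        m j / (univ.filter (fun k => E k j)).card) :
    ∑ i ∈ univ.filter (fun i => ∀ k, ¬ E k i), m i
      = Fintype.card V :=
  dagger_effective_nodes_general E m hleaf hrec
end
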